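/- Let k be a differential field of characteristic zero and P ∈ k{x} an irreducible differential polynomial of order N ≥ 0. Then I(P) = {Q ∈ k{x} : S_P^m · Q ∈ ⟨P⟩ for some m ∈ ℕ} is the smallest prime differential ideal of k{x} containing P and not containing S_P: I(P) is a prime differential ideal with P ∈ I(P) and S_P ∉ I(P), and every prime differential ideal I of k{x} with P ∈ I and S_P ∉ I contains I(P). -/

import Mathlib

open MvPolynomial

/-!
Write `S = ∂P/∂x^(N)`. Differentiating `j + 1` times gives `P^(j+1) = S x^(N+j+1) + ρ_j` with
`ρ_j` of order at most `N + j`, so modulo `⟨P⟩` and up to a power of `S` every differential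
polynomial reduces to one of order at most `N`. The ideal `(P)` is prime and does not contain `S`
(a nonzero polynomial of smaller degree in `x^(N)`), so the quotient map from `k[x, …, x^(N)]`
to the fraction field of `k{x}/(P)` extends to a ring homomorphism `ψ` on `k{x}` killing every
`P^(j)`: solve the triangular system `S v_(N+j+1) + ρ_j(v) = 0`. Because of the reduction, the
kernel of `ψ` is exactly `I(P)`, which is therefore prime and avoids `S`. It is differential since
`S^(m+1) Q' = S (S^m Q)' - m S' S^m Q`.
-/

namespace MvPolynomial

variable {R σ : Type*}

theorem degreeOf_pderiv_lt [CommSemiring R] {i : σ} {p : MvPolynomial σ R} (h : i ∈ p.vars) :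
    degreeOf i (pderiv i p) < degreeOf i p := by
  have hpos : 0 < degreeOf i p := Nat.pos_of_ne_zero (mem_vars_iff_degreeOf_ne_zero.mp h)
  refine (degreeOf_lt_iff hpos).mpr fun b hb => ?_
  have hcoeff : coeff (b + Finsupp.single i 1) p ≠ 0 := fun h0 =>
    mem_support_iff.mp hb (by rw [coeff_pderiv, h0, zero_mul])
  have := monomial_le_degreeOf i (mem_support_iff.mpr hcoeff)
  simp only [Finsupp.add_apply, Finsupp.single_eq_same] at this
  omega

theorem pderiv_ne_zero_of_mem_vars [CommSemiring R] [NoZeroDivisors R] [CharZero R] {i : σ}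
    {p : MvPolynomial σ R} (h : i ∈ p.vars) : pderiv i p ≠ 0 := by
  obtain ⟨m, hm, hmi⟩ := (mem_vars_iff_mem_support i).mp h
  have hle : Finsupp.single i 1 ≤ m :=
    Finsupp.single_le_iff.mpr (Nat.one_le_iff_ne_zero.mpr (Finsupp.mem_support_iff.mp hmi))
  intro h0
  have hcoeff := coeff_pderiv (i := i) p (m - Finsupp.single i 1)
  rw [h0, coeff_zero, tsub_add_cancel_of_le hle] at hcoeff
  have : ((m - Finsupp.single i 1 : σ →₀ ℕ) i : R) + 1 ≠ 0 := Nat.cast_add_one_ne_zero _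
  exact mem_support_iff.mp hm ((mul_eq_zero.mp hcoeff.symm).resolve_right this)

theorem not_dvd_pderiv_of_mem_vars [CommRing R] [IsDomain R] [CharZero R] {i : σ}
    {p : MvPolynomial σ R} (h : i ∈ p.vars) : ¬ p ∣ pderiv i p := by
  rintro ⟨u, hu⟩
  have hpu := pderiv_ne_zero_of_mem_vars h
  rw [hu] at hpu
  have hdeg := congrArg (degreeOf i) hu
  rw [degreeOf_mul_eq (left_ne_zero_of_mul hpu) (right_ne_zero_of_mul hpu)] at hdeg
  have := degreeOf_pderiv_lt h
  omega

theorem pderiv_mem_supported [CommSemiring R] {s : Set σ} {p : MvPolynomial σ R}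
    (hp : p ∈ supported R s) (i : σ) : pderiv i p ∈ supported R s := by
  classical
  induction hp using Algebra.adjoin_induction with
  | mem x hx =>
    obtain ⟨j, -, rfl⟩ := hx
    rcases eq_or_ne j i with rfl | hji
    · simp
    · simp [pderiv_X_of_ne hji]
  | algebraMap a => simp [algebraMap_eq]
  | add x y _ _ hx hy => exact map_add (pderiv i) x y ▸ add_mem hx hy
  | mul x y hx' hy' hx hy =>
    rw [pderiv_mul]
    exact add_mem (mul_mem hx hy') (mul_mem hx' hy)

theorem pderiv_eq_zero_of_mem_supported [CommSemiring R] {s : Set σ} {p : MvPolynomial σ R}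
    (hp : p ∈ supported R s) {i : σ} (hi : i ∉ s) : pderiv i p = 0 :=
  pderiv_eq_zero_of_notMem_vars fun h => hi (mem_supported.mp hp h)

end MvPolynomial

section Reduction

variable {R A : Type*} [CommSemiring R] [CommRing A] [Algebra R A]

def reductionSubalgebra (I : Ideal A) (s : A) (B : Subalgebra R A) (hs : s ∈ B) :
    Subalgebra R A where
  carrier := {a | ∃ m : ℕ, ∃ b ∈ B, s ^ m * a - b ∈ I}
  algebraMap_mem' r := ⟨0, algebraMap R A r, B.algebraMap_mem r, by simp⟩
  add_mem' := by
    rintro a a' ⟨m, b, hb, hab⟩ ⟨m', b', hb', hab'⟩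
    refine ⟨m + m', s ^ m' * b + s ^ m * b',
      add_mem (mul_mem (pow_mem hs _) hb) (mul_mem (pow_mem hs _) hb'), ?_⟩
    have : s ^ (m + m') * (a + a') - (s ^ m' * b + s ^ m * b') =
        s ^ m' * (s ^ m * a - b) + s ^ m * (s ^ m' * a' - b') := by ring
    rw [this]
    exact add_mem (I.mul_mem_left _ hab) (I.mul_mem_left _ hab')
  mul_mem' := by
    rintro a a' ⟨m, b, hb, hab⟩ ⟨m', b', hb', hab'⟩
    refine ⟨m + m', b * b', mul_mem hb hb', ?_⟩
    have : s ^ (m + m') * (a * a') - b * b' =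
        (s ^ m * a - b) * (s ^ m' * a') + b * (s ^ m' * a' - b') := by ring
    rw [this]
    exact add_mem (I.mul_mem_right _ hab) (I.mul_mem_left _ hab')

variable {I : Ideal A} {s : A} {B : Subalgebra R A} {hs : s ∈ B}

theorem mem_reductionSubalgebra_of_mul_sub_mem {a c : A} (hc : c ∈ reductionSubalgebra I s B hs)
    (h : s * a - c ∈ I) : a ∈ reductionSubalgebra I s B hs := by
  obtain ⟨m, b, hb, hcb⟩ := hc
  refine ⟨m + 1, b, hb, ?_⟩
  have : s ^ (m + 1) * a - b = s ^ m * (s * a - c) + (s ^ m * c - b) := by ring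
  rw [this]
  exact add_mem (I.mul_mem_left _ h) hcb

theorem eq_zero_iff_exists_pow_mul_mem {F : Type*} [CommRing F] [IsDomain F] (ψ : A →+* F)
    (hI : I ≤ RingHom.ker ψ) (hψs : ψ s ≠ 0) (hB : ∀ b ∈ B, ψ b = 0 → b ∈ I)
    (hred : reductionSubalgebra I s B hs = ⊤) (a : A) :
    ψ a = 0 ↔ ∃ m : ℕ, s ^ m * a ∈ I := by
  constructor
  · intro ha
    obtain ⟨m, b, hb, hab⟩ := (hred ▸ Algebra.mem_top : a ∈ reductionSubalgebra I s B hs)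
    have hψb : ψ b = 0 := by
      simpa [ha] using hI hab
    exact ⟨m, by simpa using add_mem hab (hB b hb hψb)⟩
  · rintro ⟨m, hm⟩
    have := hI hm
    rw [RingHom.mem_ker, map_mul, map_pow] at this
    exact (mul_eq_zero.mp this).resolve_left (pow_ne_zero m hψs)

end Reduction

section Differential

variable {A : Type*} [CommRing A]

def differentialSpan (d : A → A) (P : A) : Ideal A := Ideal.span {R | ∃ j : ℕ, R = d^[j] P}

theorem iterate_mem_differentialSpan (d : A → A) (P : A) (j : ℕ) :
    d^[j] P ∈ differentialSpan d P :=
  Ideal.subset_span ⟨j, rfl⟩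

theorem differentialSpan_le {d : A → A} {P : A} {J : Ideal A} (hJ : ∀ a ∈ J, d a ∈ J)
    (hP : P ∈ J) : differentialSpan d P ≤ J := by
  refine Ideal.span_le.mpr ?_
  rintro _ ⟨j, rfl⟩
  induction j with
  | zero => exact hP
  | succ j ih => exact Function.iterate_succ_apply' d j P ▸ hJ _ ih

variable (d : Derivation ℤ A A)

theorem map_mem_differentialSpan {P a : A} (ha : a ∈ differentialSpan d P) :
    d a ∈ differentialSpan d P := by
  induction ha using Submodule.span_induction with
  | mem x hx =>
    obtain ⟨j, rfl⟩ := hx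
    exact Function.iterate_succ_apply' d j P ▸ iterate_mem_differentialSpan d P (j + 1)
  | zero => simp
  | add x y _ _ hx hy => exact (map_add d x y).symm ▸ add_mem hx hy
  | smul a x hx' hx =>
    rw [smul_eq_mul, d.leibniz, smul_eq_mul, smul_eq_mul]
    exact add_mem (Ideal.mul_mem_left _ _ hx) (Ideal.mul_mem_right _ _ hx')

theorem pow_succ_mul_map_mem {I : Ideal A} (hI : ∀ a ∈ I, d a ∈ I) {s a : A} {m : ℕ}
    (h : s ^ m * a ∈ I) : s ^ (m + 1) * d a ∈ I := by
  have key : s ^ (m + 1) * d a = s * d (s ^ m * a) - (m * d s) * (s ^ m * a) := by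
    rcases m with _ | m
    · simp
    · rw [d.leibniz, d.leibniz_pow]
      simp only [smul_eq_mul, nsmul_eq_mul, Nat.add_sub_cancel]
      push_cast
      ring
  rw [key]
  exact sub_mem (I.mul_mem_left _ (hI _ h)) (I.mul_mem_left _ h)

end Differential

section DifferentialPolynomial

variable {k : Type*}

theorem exists_map_eq_pderiv_mul_X_add [CommRing k] {δ : k → k}
    {d : Derivation ℤ (MvPolynomial ℕ k) (MvPolynomial ℕ k)}
    (hdC : ∀ a, d (C a) = C (δ a)) (hdX : ∀ n, d (X n) = X (n + 1)) {M : ℕ}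
    {p : MvPolynomial ℕ k} (hp : p ∈ supported k (Set.Iic M)) :
    ∃ r ∈ supported k (Set.Iic M), d p = pderiv M p * X (M + 1) + r := by
  induction hp using Algebra.adjoin_induction with
  | mem x hx =>
    obtain ⟨i, hi, rfl⟩ := hx
    rcases (Set.mem_Iic.mp hi).lt_or_eq with hi | rfl
    · refine ⟨X (i + 1), Algebra.subset_adjoin ⟨i + 1, Set.mem_Iic.mpr hi, rfl⟩, ?_⟩
      rw [hdX, pderiv_X_of_ne hi.ne, zero_mul, zero_add]
    · exact ⟨0, zero_mem _, by rw [hdX, pderiv_X_self, one_mul, add_zero]⟩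
  | algebraMap a =>
    refine ⟨C (δ a), Subalgebra.algebraMap_mem _ (δ a), ?_⟩
    rw [algebraMap_eq, hdC, pderiv_C, zero_mul, zero_add]
  | add x y _ _ hx hy =>
    obtain ⟨r, hr, hxr⟩ := hx
    obtain ⟨r', hr', hyr'⟩ := hy
    exact ⟨r + r', add_mem hr hr', by rw [map_add, hxr, hyr', map_add]; ring⟩
  | mul x y hx' hy' hx hy =>
    obtain ⟨r, hr, hxr⟩ := hx
    obtain ⟨r', hr', hyr'⟩ := hy
    refine ⟨x * r' + y * r, add_mem (mul_mem hx' hr') (mul_mem hy' hr), ?_⟩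
    rw [d.leibniz, smul_eq_mul, smul_eq_mul, hxr, hyr', pderiv_mul]
    ring

theorem exists_iterate_eq_pderiv_mul_X_add [CommRing k] {δ : k → k}
    {d : Derivation ℤ (MvPolynomial ℕ k) (MvPolynomial ℕ k)}
    (hdC : ∀ a, d (C a) = C (δ a)) (hdX : ∀ n, d (X n) = X (n + 1)) {N : ℕ}
    {P : MvPolynomial ℕ k} (hP : P ∈ supported k (Set.Iic N)) (j : ℕ) :
    ∃ ρ ∈ supported k (Set.Iic (N + j)), d^[j + 1] P = pderiv N P * X (N + j + 1) + ρ := by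
  induction j with
  | zero => simpa using exists_map_eq_pderiv_mul_X_add hdC hdX hP
  | succ j ih =>
    obtain ⟨ρ, hρ, hPρ⟩ := ih
    rw [← add_assoc]
    have hS : pderiv N P ∈ supported k (Set.Iic (N + j)) :=
      supported_mono (Set.Iic_subset_Iic.mpr (Nat.le_add_right N j)) (pderiv_mem_supported hP N)
    have hmem : d^[j + 1] P ∈ supported k (Set.Iic (N + j + 1)) := by
      rw [hPρ]
      refine add_mem (mul_mem ?_ (Algebra.subset_adjoin ⟨_, Set.mem_Iic.mpr le_rfl, rfl⟩))
        ?_ <;> exact supported_mono (Set.Iic_subset_Iic.mpr (Nat.le_succ _)) ‹_›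
    obtain ⟨r, hr, hdr⟩ := exists_map_eq_pderiv_mul_X_add hdC hdX hmem
    refine ⟨r, hr, ?_⟩
    have hnot : N + j + 1 ∉ Set.Iic (N + j) := by simp
    rw [Function.iterate_succ_apply', hdr, hPρ, map_add, pderiv_mul, pderiv_X_self,
      pderiv_eq_zero_of_mem_supported hS hnot, pderiv_eq_zero_of_mem_supported hρ hnot]
    ring

end DifferentialPolynomial

section TriangularSystem

variable {k F : Type*} [CommSemiring k] [Field F]

-- The truncation `if m < n` only makes the recursion well founded; it is invisible as soon as
-- `ρ j` involves only the variables `≤ N + j`.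
noncomputable def solveTriangular (f : k →+* F) (N : ℕ) (v₀ : ℕ → F) (s : F)
    (ρ : ℕ → MvPolynomial ℕ k) : ℕ → F
  | n =>
    if n ≤ N then v₀ n
    else -eval₂ f (fun m => if _ : m < n then solveTriangular f N v₀ s ρ m else 0)
      (ρ (n - (N + 1))) / s
termination_by n => n

variable {f : k →+* F} {N : ℕ} {v₀ : ℕ → F} {s : F} {ρ : ℕ → MvPolynomial ℕ k}

theorem solveTriangular_of_le {n : ℕ} (h : n ≤ N) :
    solveTriangular f N v₀ s ρ n = v₀ n := by
  rw [solveTriangular, if_pos h]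

theorem mul_solveTriangular_add_eval₂ (hs : s ≠ 0) {j : ℕ}
    (hρ : ρ j ∈ supported k (Set.Iic (N + j))) :
    s * solveTriangular f N v₀ s ρ (N + j + 1) +
      eval₂ f (solveTriangular f N v₀ s ρ) (ρ j) = 0 := by
  have hρv : eval₂ f (fun m => if _ : m < N + j + 1 then solveTriangular f N v₀ s ρ m else 0)
      (ρ j) = eval₂ f (solveTriangular f N v₀ s ρ) (ρ j) :=
    eval₂Hom_congr' rfl (fun i hi _ => dif_pos (Nat.lt_succ_of_le (mem_supported.mp hρ hi))) rfl
  rw [solveTriangular, if_neg (by omega), show N + j + 1 - (N + 1) = j by omega, hρv,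
    mul_div_cancel₀ _ hs, neg_add_cancel]

end TriangularSystem

section SeparantSaturation

variable {k : Type*} [CommRing k] {δ : k → k}
  {d : Derivation ℤ (MvPolynomial ℕ k) (MvPolynomial ℕ k)} {N : ℕ} {P : MvPolynomial ℕ k}

theorem reductionSubalgebra_differentialSpan_eq_top (hdC : ∀ a, d (C a) = C (δ a))
    (hdX : ∀ n, d (X n) = X (n + 1)) (hP : P ∈ supported k (Set.Iic N)) :
    reductionSubalgebra (differentialSpan d P) (pderiv N P) (supported k (Set.Iic N))
      (pderiv_mem_supported hP N) = ⊤ := by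
  have hle : ∀ n, supported k (Set.Iic (N + n)) ≤
      reductionSubalgebra (differentialSpan d P) (pderiv N P) (supported k (Set.Iic N))
        (pderiv_mem_supported hP N) := by
    intro n
    induction n with
    | zero => exact fun Q hQ => ⟨0, Q, hQ, by simp⟩
    | succ n ih =>
      rw [supported_eq_adjoin_X, Algebra.adjoin_le_iff]
      rintro _ ⟨i, hi, rfl⟩
      rcases (Set.mem_Iic.mp hi).lt_or_eq with hi | rfl
      · exact ih (Algebra.subset_adjoin ⟨i, Set.mem_Iic.mpr (Nat.lt_succ_iff.mp hi), rfl⟩)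
      · obtain ⟨ρ, hρ, hPρ⟩ := exists_iterate_eq_pderiv_mul_X_add hdC hdX hP n
        refine mem_reductionSubalgebra_of_mul_sub_mem (neg_mem (ih hρ)) ?_
        rw [sub_neg_eq_add, ← add_assoc, ← hPρ]
        exact iterate_mem_differentialSpan _ _ _
  refine eq_top_iff.mpr fun Q _ => hle (Q.vars.sup id) (mem_supported.mpr fun i hi => ?_)
  exact Set.mem_Iic.mpr (le_add_left (Finset.le_sup (f := id) hi))

theorem exists_ringHom_differentialSpan_le_ker {F : Type*} [Field F]
    (hdC : ∀ a, d (C a) = C (δ a)) (hdX : ∀ n, d (X n) = X (n + 1))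
    (hP : P ∈ supported k (Set.Iic N)) (φ : MvPolynomial ℕ k →+* F) (hφP : φ P = 0)
    (hφS : φ (pderiv N P) ≠ 0) :
    ∃ ψ : MvPolynomial ℕ k →+* F,
      (∀ Q ∈ supported k (Set.Iic N), ψ Q = φ Q) ∧
        differentialSpan d P ≤ RingHom.ker ψ := by
  choose ρ hρ hPρ using exists_iterate_eq_pderiv_mul_X_add hdC hdX hP
  set v := solveTriangular (φ.comp C) N (φ ∘ X) (φ (pderiv N P)) ρ
  have hψφ : ∀ Q ∈ supported k (Set.Iic N), eval₂Hom (φ.comp C) v Q = φ Q := fun Q hQ =>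
    hom_congr_vars (by ext; simp) (fun i hi _ => by
      simp [v, solveTriangular_of_le (mem_supported.mp hQ hi)]) rfl
  refine ⟨eval₂Hom (φ.comp C) v, hψφ, Ideal.span_le.mpr ?_⟩
  rintro _ ⟨j, rfl⟩
  rcases j with _ | j
  · simpa [hψφ P hP] using hφP
  · rw [SetLike.mem_coe, RingHom.mem_ker, hPρ, map_add, map_mul,
      hψφ _ (pderiv_mem_supported hP N), eval₂Hom_X']
    exact mul_solveTriangular_add_eval₂ hφS (hρ j)

theorem exists_isPrime_mem_iff_pow_pderiv_mul_mem (hdC : ∀ a, d (C a) = C (δ a))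
    (hdX : ∀ n, d (X n) = X (n + 1)) (hP : P ∈ supported k (Set.Iic N)) (hPprime : Prime P)
    (hS : ¬ P ∣ pderiv N P) :
    ∃ I : Ideal (MvPolynomial ℕ k), I.IsPrime ∧ pderiv N P ∉ I ∧
      ∀ Q, Q ∈ I ↔ ∃ m : ℕ, pderiv N P ^ m * Q ∈ differentialSpan d P := by
  have := (Ideal.span_singleton_prime hPprime.ne_zero).mpr hPprime
  let φ := (algebraMap (MvPolynomial ℕ k ⧸ Ideal.span {P})
    (FractionRing (MvPolynomial ℕ k ⧸ Ideal.span {P}))).comp (Ideal.Quotient.mk _)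
  have hφ : ∀ Q, φ Q = 0 ↔ P ∣ Q := fun Q => by
    simp [φ, Ideal.Quotient.eq_zero_iff_mem, Ideal.mem_span_singleton]
  obtain ⟨ψ, hψφ, hψ⟩ :=
    exists_ringHom_differentialSpan_le_ker hdC hdX hP φ ((hφ P).2 dvd_rfl) (mt (hφ _).1 hS)
  have hψS : ψ (pderiv N P) ≠ 0 := by
    rw [hψφ _ (pderiv_mem_supported hP N)]
    exact mt (hφ _).1 hS
  refine ⟨RingHom.ker ψ, RingHom.ker_isPrime ψ, hψS,
    eq_zero_iff_exists_pow_mul_mem ψ hψ hψS (fun b hb hψb => ?_)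
      (reductionSubalgebra_differentialSpan_eq_top hdC hdX hP)⟩
  obtain ⟨c, rfl⟩ := (hφ b).1 (hψφ b hb ▸ hψb)
  exact Ideal.mul_mem_right _ _ (iterate_mem_differentialSpan d P 0)

end SeparantSaturation

theorem separant_saturation_is_smallest_prime_differential_ideal_general
    {k : Type*} [Field k] [CharZero k]
    (δ : k → k)
    (D : MvPolynomial ℕ k → MvPolynomial ℕ k)
    (hDadd : ∀ p q, D (p + q) = D p + D q)
    (hDmul : ∀ p q, D (p * q) = p * D q + q * D p)
    (hDC : ∀ a : k, D (C a) = C (δ a))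
    (hDX : ∀ n : ℕ, D (X n) = X (n + 1))
    (P : MvPolynomial ℕ k) (hPirr : Irreducible P)
    (N : ℕ) (hord : N ∈ P.vars) (hordmax : ∀ m ∈ P.vars, m ≤ N) :
    ∃ I : Ideal (MvPolynomial ℕ k),
      (I : Set (MvPolynomial ℕ k)) =
        {Q | ∃ m : ℕ, (pderiv N P) ^ m * Q ∈ Ideal.span {R | ∃ j : ℕ, R = D^[j] P}} ∧
      I.IsPrime ∧
      (∀ Q ∈ I, D Q ∈ I) ∧
      P ∈ I ∧
      pderiv N P ∉ I ∧
      (∀ J : Ideal (MvPolynomial ℕ k), J.IsPrime → (∀ Q ∈ J, D Q ∈ J) →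
        P ∈ J → pderiv N P ∉ J → I ≤ J) := by
  obtain ⟨d, rfl⟩ :
      ∃ d : Derivation ℤ (MvPolynomial ℕ k) (MvPolynomial ℕ k), ⇑d = D :=
    ⟨Derivation.mk' (AddMonoidHom.mk' D hDadd).toIntLinearMap hDmul, rfl⟩
  obtain ⟨I, hIprime, hSI, hI⟩ := exists_isPrime_mem_iff_pow_pderiv_mul_mem hDC hDX
    (mem_supported.mpr hordmax) hPirr.prime (not_dvd_pderiv_of_mem_vars hord)
  refine ⟨I, Set.ext hI, hIprime, fun Q hQ => ?_,
    (hI P).2 ⟨0, by simpa using iterate_mem_differentialSpan d P 0⟩, hSI,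
    fun J hJ hJd hPJ hSJ Q hQ => ?_⟩
  · obtain ⟨m, hm⟩ := (hI Q).1 hQ
    exact (hI _).2 ⟨m + 1, pow_succ_mul_map_mem d (fun _ => map_mem_differentialSpan d) hm⟩
  · obtain ⟨m, hm⟩ := (hI Q).1 hQ
    exact (hJ.mem_or_mem (differentialSpan_le hJd hPJ hm)).resolve_left
      fun h => hSJ (hJ.mem_of_pow_mem m h)

/-- For an irreducible differential polynomial `P` of order `N ≥ 0` in the
differential polynomial ring `k{x}` (modelled as `MvPolynomial ℕ k`, where the variable
`n` stands for `x^(n)`, with derivation `D` extending the derivation `δ` of `k` and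
sending `x^(n)` to `x^(n+1)`), the set `I(P) = {Q | ∃ m, S_P ^ m * Q ∈ ⟨P⟩}` is the
smallest prime differential ideal of `k{x}` containing `P` and not containing the
separant `S_P = ∂P/∂x^(N)`; here `⟨P⟩` is the smallest differential ideal containing
`P`, i.e. the ideal spanned by the iterated derivatives of `P`. -/
theorem separant_saturation_is_smallest_prime_differential_ideal
    {k : Type*} [Field k] [CharZero k]
    (δ : k → k)
    (hδadd : ∀ x y, δ (x + y) = δ x + δ y)
    (hδmul : ∀ x y, δ (x * y) = x * δ y + y * δ x)
    (D : MvPolynomial ℕ k → MvPolynomial ℕ k)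
    (hDadd : ∀ p q, D (p + q) = D p + D q)
    (hDmul : ∀ p q, D (p * q) = p * D q + q * D p)
    (hDC : ∀ a : k, D (C a) = C (δ a))
    (hDX : ∀ n : ℕ, D (X n) = X (n + 1))
    (P : MvPolynomial ℕ k) (hPirr : Irreducible P)
    (N : ℕ) (hord : N ∈ P.vars) (hordmax : ∀ m ∈ P.vars, m ≤ N) :
    ∃ I : Ideal (MvPolynomial ℕ k),
      (I : Set (MvPolynomial ℕ k)) =
        {Q | ∃ m : ℕ, (pderiv N P) ^ m * Q ∈ Ideal.span {R | ∃ j : ℕ, R = D^[j] P}} ∧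
      I.IsPrime ∧
      (∀ Q ∈ I, D Q ∈ I) ∧
      P ∈ I ∧
      pderiv N P ∉ I ∧
      (∀ J : Ideal (MvPolynomial ℕ k), J.IsPrime → (∀ Q ∈ J, D Q ∈ J) →
        P ∈ J → pderiv N P ∉ J → I ≤ J) :=
  separant_saturation_is_smallest_prime_differential_ideal_general δ D hDadd hDmul hDC hDX P hPirr N
    hord hordmax
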